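/- For any kinematically admissible û ∈ V and any statically admissible flux p̂, defining the averaged flux p̂* = ½(p̂ + A∇û), one has 4 |||q − p̂*|||_F² = E_CRE(û, p̂)², where q = A∇u is the exact flux. -/

import Mathlib

/-!
Write `q = A∇u`, `r = A∇û` and `‖y‖² = A⁻¹y·y`. Since `q - p̂* = (q - p̂) + ½(p̂ - r)` and
`A⁻¹(q - r) = ∇(u - û)`, expanding the two quadratic forms gives pointwise
`4‖q - p̂*‖² = ‖p̂ - r‖² + 4 (q - p̂)·∇(u - û)`.
Both `q` and `p̂` are statically admissible, so the last term integrates to zero against the test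
function `u - û ∈ V`; it is integrable because the upper ellipticity bound makes `A` bounded, hence
`q ∈ L²`.
-/

open MeasureTheory Matrix

/-- The gradient of a function on `ℝ^d`, viewed as a plain vector in `Fin d → ℝ`. -/
noncomputable def grad {d : ℕ} (v : EuclideanSpace ℝ (Fin d) → ℝ)
    (x : EuclideanSpace ℝ (Fin d)) : Fin d → ℝ :=
  (gradient v x : EuclideanSpace ℝ (Fin d))

/-- Also true when `g` is not integrable: then neither is `f`, and both integrals are `0`. -/
theorem integral_eq_of_ae_eq_add_of_integral_eq_zero {X E : Type*} [MeasurableSpace X]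
    {μ : Measure X} [NormedAddCommGroup E] [NormedSpace ℝ E] {f g h : X → E}
    (hfg : f =ᵐ[μ] g + h) (hh : Integrable h μ) (h0 : ∫ x, h x ∂μ = 0) :
    ∫ x, f x ∂μ = ∫ x, g x ∂μ := by
  by_cases hg : Integrable g μ
  · rw [integral_congr_ae hfg, integral_add' hg hh, h0, add_zero]
  · have hf : ¬Integrable f μ := fun hf =>
      hg <| (hf.sub hh).congr <| by filter_upwards [hfg] with x hx; simp [hx]
    rw [integral_undef hf, integral_undef hg]

namespace Matrix

variable {n : Type*} [Fintype n] [DecidableEq n]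

theorem isUnit_det_of_coercive {M : Matrix n n ℝ} {α : ℝ} (hα : 0 < α)
    (h : ∀ ξ : n → ℝ, α * ∑ i, ξ i ^ 2 ≤ M *ᵥ ξ ⬝ᵥ ξ) : IsUnit M.det := by
  refine isUnit_iff_ne_zero.mpr fun hdet => ?_
  obtain ⟨ξ, hξ, hMξ⟩ := exists_mulVec_eq_zero_iff.mpr hdet
  have hsq : ∑ i, ξ i ^ 2 = ξ ⬝ᵥ ξ := by simp only [dotProduct, sq]
  have hcoer := h ξ
  rw [hMξ, zero_dotProduct, hsq] at hcoer
  exact hξ <| dotProduct_self_eq_zero.mp <|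
    le_antisymm (nonpos_of_mul_nonpos_right hcoer hα) (dotProduct_self_star_nonneg ξ)

theorem abs_apply_le_of_quadForm_le {M : Matrix n n ℝ} (hs : M.IsSymm) {β : ℝ}
    (h0 : ∀ ξ : n → ℝ, 0 ≤ M *ᵥ ξ ⬝ᵥ ξ) (hβ : ∀ ξ : n → ℝ, M *ᵥ ξ ⬝ᵥ ξ ≤ β * ∑ k, ξ k ^ 2)
    (i j : n) : |M i j| ≤ β := by
  set ei : n → ℝ := Pi.single i 1
  set ej : n → ℝ := Pi.single j 1
  have hpolar : M *ᵥ (ei + ej) ⬝ᵥ (ei + ej) - M *ᵥ (ei - ej) ⬝ᵥ (ei - ej) = 4 * M i j := by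
    simp only [ei, ej, mulVec_add, mulVec_sub, mulVec_single, MulOpposite.op_one, one_smul,
      dotProduct_add, dotProduct_sub, dotProduct_single, Pi.add_apply, Pi.sub_apply, col_apply,
      mul_one, hs.apply i j]
    ring
  have hβ0 : 0 ≤ β := by simpa [ei, Pi.single_apply] using (h0 ei).trans (hβ ei)
  have hsum : ∑ k, (ei + ej) k ^ 2 ≤ 4 ∧ ∑ k, (ei - ej) k ^ 2 ≤ 4 := by
    rcases eq_or_ne i j with rfl | hij
    · simp only [ei, ej, ← Pi.single_add, sub_self, Pi.single_apply, ite_pow]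
      norm_num
    · norm_num [ei, ej, Pi.single_apply, hij.symm, add_sq, sub_sq, Finset.sum_add_distrib,
        Finset.sum_sub_distrib]
  rw [abs_le]
  constructor <;> nlinarith [hβ (ei + ej), hβ (ei - ej), h0 (ei + ej), h0 (ei - ej)]

theorem four_mul_inv_quadForm_sub_midpoint (M : Matrix n n ℝ) (hs : M.IsSymm) (hdet : IsUnit M.det)
    (g h p : n → ℝ) :
    4 * (M⁻¹ *ᵥ (M *ᵥ g - (1 / 2 : ℝ) • (p + M *ᵥ h)) ⬝ᵥ (M *ᵥ g - (1 / 2 : ℝ) • (p + M *ᵥ h)))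
      = M⁻¹ *ᵥ (p - M *ᵥ h) ⬝ᵥ (p - M *ᵥ h) + 4 * ((M *ᵥ g - p) ⬝ᵥ (g - h)) := by
  have hgh : g - h = M⁻¹ *ᵥ ((M *ᵥ g - p) + (p - M *ᵥ h)) := by
    rw [sub_add_sub_cancel, ← mulVec_sub, mulVec_mulVec, nonsing_inv_mul _ hdet, one_mulVec]
  have hmid : M *ᵥ g - (1 / 2 : ℝ) • (p + M *ᵥ h)
      = (M *ᵥ g - p) + (1 / 2 : ℝ) • (p - M *ᵥ h) := by
    module
  have hsymm : ∀ v w : n → ℝ, M⁻¹ *ᵥ v ⬝ᵥ w = v ⬝ᵥ M⁻¹ *ᵥ w := fun v w => by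
    rw [dotProduct_mulVec, ← mulVec_transpose, hs.inv.eq]
  rw [hgh, hmid]
  generalize M *ᵥ g - p = z
  generalize p - M *ᵥ h = y
  have hyz : y ⬝ᵥ M⁻¹ *ᵥ z = z ⬝ᵥ M⁻¹ *ᵥ y := by rw [dotProduct_comm, hsymm]
  simp only [mulVec_add, mulVec_smul, add_dotProduct, dotProduct_add, smul_dotProduct,
    dotProduct_smul, smul_eq_mul, hsymm, hyz]
  ring

end Matrix

section

variable {X : Type*} [MeasurableSpace X] {μ : Measure X} {n : Type*} [Fintype n]

theorem MeasureTheory.MemLp.integrable_dotProduct {f g : X → n → ℝ} (hf : MemLp f 2 μ)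
    (hg : MemLp g 2 μ) : Integrable (fun x => f x ⬝ᵥ g x) μ :=
  integrable_finsetSum _ fun i _ => (hf.eval i).integrable_mul (hg.eval i)

theorem MeasureTheory.MemLp.mulVec {p : ENNReal} {A : X → Matrix n n ℝ}
    (hA : ∀ i j, AEStronglyMeasurable (fun x => A x i j) μ) {C : ℝ}
    (hC : ∀ᵐ x ∂μ, ∀ i j, |A x i j| ≤ C) {g : X → n → ℝ} (hg : MemLp g p μ) :
    MemLp (fun x => A x *ᵥ g x) p μ :=
  MemLp.of_eval fun i => memLp_finsetSum _ fun j _ =>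
    (hg.eval j).mul' <| memLp_top_of_bound (hA i j) C <| by
      filter_upwards [hC] with x hx
      exact hx i j

end

section

variable {d : ℕ}

theorem memLp_grad {μ : Measure (EuclideanSpace ℝ (Fin d))} {p : ENNReal}
    {v : EuclideanSpace ℝ (Fin d) → ℝ} (hv : MemLp (gradient v) p μ) : MemLp (grad v) p μ :=
  MemLp.of_eval hv.eval_piLp

theorem grad_sub {u v : EuclideanSpace ℝ (Fin d) → ℝ} {x : EuclideanSpace ℝ (Fin d)}
    (hu : DifferentiableAt ℝ u x) (hv : DifferentiableAt ℝ v x) :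
    grad (u - v) x = grad u x - grad v x := by
  simp only [grad, gradient, fderiv_sub hu hv, map_sub, WithLp.ofLp_sub]

end

theorem cre_averaged_flux_identity_general {d : ℕ}
    (Ω : Set (EuclideanSpace ℝ (Fin d)))
    (hΩopen : IsOpen Ω)
    (A : EuclideanSpace ℝ (Fin d) → Matrix (Fin d) (Fin d) ℝ)
    (hAmeas : ∀ i j, Measurable fun x => A x i j)
    (hAsymm : ∀ x ∈ Ω, (A x).IsSymm)
    (α β : ℝ) (hα : 0 < α)
    (hell : ∀ᵐ x ∂(volume.restrict Ω), ∀ ξ : Fin d → ℝ,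
      α * (∑ i, ξ i ^ 2) ≤ (A x).mulVec ξ ⬝ᵥ ξ ∧ (A x).mulVec ξ ⬝ᵥ ξ ≤ β * (∑ i, ξ i ^ 2))
    (V : Submodule ℝ (EuclideanSpace ℝ (Fin d) → ℝ))
    (hVdiff : ∀ v ∈ V, ContDiffOn ℝ 1 v Ω)
    (hVgradL2 : ∀ v ∈ V, MemLp (gradient v) 2 (volume.restrict Ω))
    (f : EuclideanSpace ℝ (Fin d) → ℝ)
    (u : EuclideanSpace ℝ (Fin d) → ℝ) (hu : u ∈ V)
    (husol : ∀ v ∈ V,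
      ∫ x in Ω, (A x).mulVec (grad u x) ⬝ᵥ grad v x = ∫ x in Ω, f x * v x)
    (uhat : EuclideanSpace ℝ (Fin d) → ℝ) (huhat : uhat ∈ V)
    (phat : EuclideanSpace ℝ (Fin d) → Fin d → ℝ)
    (hphatL2 : MemLp phat 2 (volume.restrict Ω))
    (hphatSA : ∀ v ∈ V, ∫ x in Ω, phat x ⬝ᵥ grad v x = ∫ x in Ω, f x * v x)
    :
    4 * (∫ x in Ω,
          ((A x)⁻¹).mulVec
              ((A x).mulVec (grad u x) - (1 / 2 : ℝ) • (phat x + (A x).mulVec (grad uhat x)))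
            ⬝ᵥ ((A x).mulVec (grad u x) - (1 / 2 : ℝ) • (phat x + (A x).mulVec (grad uhat x))))
      = ∫ x in Ω, ((A x)⁻¹).mulVec (phat x - (A x).mulVec (grad uhat x))
            ⬝ᵥ (phat x - (A x).mulVec (grad uhat x)) := by
  set μ := volume.restrict Ω
  have hΩ : ∀ᵐ x ∂μ, x ∈ Ω := ae_restrict_mem hΩopen.measurableSet
  have hgrad : ∀ v ∈ V, MemLp (grad v) 2 μ := fun v hv => memLp_grad (hVgradL2 v hv)
  have hq : MemLp (fun x => A x *ᵥ grad u x) 2 μ :=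
    (hgrad u hu).mulVec (fun i j => (hAmeas i j).aestronglyMeasurable) (C := β) <| by
      filter_upwards [hell, hΩ] with x hx hxΩ
      exact abs_apply_le_of_quadForm_le (hAsymm x hxΩ)
        (fun ξ => (by positivity : 0 ≤ α * _).trans (hx ξ).1) (fun ξ => (hx ξ).2)
  have hw : u - uhat ∈ V := V.sub_mem hu huhat
  have hgrad_w : ∀ᵐ x ∂μ, grad (u - uhat) x = grad u x - grad uhat x := by
    filter_upwards [hΩ] with x hx
    have hdiff : ∀ v ∈ V, DifferentiableAt ℝ v x := fun v hv =>
      ((hVdiff v hv).differentiableOn one_ne_zero).differentiableAt (hΩopen.mem_nhds hx)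
    exact grad_sub (hdiff u hu) (hdiff uhat huhat)
  have hcross : ∫ x, (A x *ᵥ grad u x - phat x) ⬝ᵥ (grad u x - grad uhat x) ∂μ = 0 := by
    rw [integral_congr_ae (by filter_upwards [hgrad_w] with x hx; rw [← hx, sub_dotProduct]),
      integral_sub (hq.integrable_dotProduct (hgrad _ hw))
        (hphatL2.integrable_dotProduct (hgrad _ hw)), husol _ hw, hphatSA _ hw, sub_self]
  have hcross_int :
      Integrable (fun x => (A x *ᵥ grad u x - phat x) ⬝ᵥ (grad u x - grad uhat x)) μ :=
    (hq.sub hphatL2).integrable_dotProduct ((hgrad u hu).sub (hgrad uhat huhat))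
  rw [← integral_const_mul]
  refine integral_eq_of_ae_eq_add_of_integral_eq_zero ?_ (hcross_int.const_mul 4)
    (by rw [integral_const_mul, hcross, mul_zero])
  filter_upwards [hell, hΩ] with x hx hxΩ
  exact four_mul_inv_quadForm_sub_midpoint _ (hAsymm x hxΩ) (isUnit_det_of_coercive hα fun ξ => (hx ξ).1) _ _ _

/-- For a kinematically admissible `uhat ∈ V` and a statically admissible flux `phat`,
with the averaged flux `p* = (phat + A∇uhat)/2`, one has
`4 |||q − p*|||_F² = E_CRE(uhat, phat)²` where `q = A∇u` is the exact flux. -/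
theorem cre_averaged_flux_identity {d : ℕ}
    (Ω : Set (EuclideanSpace ℝ (Fin d)))
    (hΩopen : IsOpen Ω) (hΩbdd : Bornology.IsBounded Ω)
    (A : EuclideanSpace ℝ (Fin d) → Matrix (Fin d) (Fin d) ℝ)
    (hAmeas : ∀ i j, Measurable fun x => A x i j)
    (hAsymm : ∀ x ∈ Ω, (A x).IsSymm)
    (α β : ℝ) (hα : 0 < α) (hβ : 0 < β)
    (hell : ∀ᵐ x ∂(volume.restrict Ω), ∀ ξ : Fin d → ℝ,
      α * (∑ i, ξ i ^ 2) ≤ (A x).mulVec ξ ⬝ᵥ ξ ∧ (A x).mulVec ξ ⬝ᵥ ξ ≤ β * (∑ i, ξ i ^ 2))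
    (V : Submodule ℝ (EuclideanSpace ℝ (Fin d) → ℝ))
    (hVdiff : ∀ v ∈ V, ContDiffOn ℝ 1 v Ω)
    (hVL2 : ∀ v ∈ V, MemLp v 2 (volume.restrict Ω))
    (hVgradL2 : ∀ v ∈ V, MemLp (gradient v) 2 (volume.restrict Ω))
    (f : EuclideanSpace ℝ (Fin d) → ℝ) (hf : MemLp f 2 (volume.restrict Ω))
    (u : EuclideanSpace ℝ (Fin d) → ℝ) (hu : u ∈ V)
    (husol : ∀ v ∈ V,
      ∫ x in Ω, (A x).mulVec (grad u x) ⬝ᵥ grad v x = ∫ x in Ω, f x * v x)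
    (uhat : EuclideanSpace ℝ (Fin d) → ℝ) (huhat : uhat ∈ V)
    (phat : EuclideanSpace ℝ (Fin d) → Fin d → ℝ)
    (hphatL2 : MemLp phat 2 (volume.restrict Ω))
    (hphatSA : ∀ v ∈ V, ∫ x in Ω, phat x ⬝ᵥ grad v x = ∫ x in Ω, f x * v x)
    :
    4 * (∫ x in Ω,
          ((A x)⁻¹).mulVec
              ((A x).mulVec (grad u x) - (1 / 2 : ℝ) • (phat x + (A x).mulVec (grad uhat x)))
            ⬝ᵥ ((A x).mulVec (grad u x) - (1 / 2 : ℝ) • (phat x + (A x).mulVec (grad uhat x))))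
      = ∫ x in Ω, ((A x)⁻¹).mulVec (phat x - (A x).mulVec (grad uhat x))
            ⬝ᵥ (phat x - (A x).mulVec (grad uhat x)) :=
  cre_averaged_flux_identity_general Ω hΩopen A hAmeas hAsymm α β hα hell V hVdiff hVgradL2 f u hu
    husol uhat huhat phat hphatL2 hphatSA
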